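/- If G is a claw-free graph of maximum degree at most d for some d ≥ 3, and M is a maximal induced matching of G, then |M| ≥ m(G) / ((7/6)d² + d). -/

import Mathlib

open Classical

variable {V : Type*}

/-- Two edges (as `Sym2 V`) are in conflict: they are at distance at most 2
in the line graph, i.e. they share a vertex or some edge of `G` joins them. -/
def Conflict (G : SimpleGraph V) (e f : Sym2 V) : Prop :=
  ∃ a ∈ e, ∃ b ∈ f, a = b ∨ G.Adj a b

/-- `C_G(e)`: the set of edges of `G` in conflict with `e` (including `e`). -/
def CSet (G : SimpleGraph V) (e : Sym2 V) : Set (Sym2 V) :=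
  {f | f ∈ G.edgeSet ∧ Conflict G e f}

/-- `PC_G(M, e)`: the private conflict edges of `e` with respect to `M`. -/
def PCSet (G : SimpleGraph V) (M : Set (Sym2 V)) (e : Sym2 V) : Set (Sym2 V) :=
  CSet G e \ ⋃ f ∈ M \ {e}, CSet G f

/-- `M` is an induced matching of `G`. -/
def IsInducedMatching (G : SimpleGraph V) (M : Set (Sym2 V)) : Prop :=
  M ⊆ G.edgeSet ∧ ∀ e ∈ M, ∀ f ∈ M, e ≠ f → ¬ Conflict G e f

/-- `M` is a maximal induced matching of `G`. -/
def IsMaximalInducedMatching (G : SimpleGraph V) (M : Set (Sym2 V)) : Prop :=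
  IsInducedMatching G M ∧ ∀ M', IsInducedMatching G M' → M ⊆ M' → M' = M

/-- `M` is stable under the local-search exchange operation: any two distinct
private conflict edges of an edge of `M` conflict with each other. -/
def LSStable (G : SimpleGraph V) (M : Set (Sym2 V)) : Prop :=
  ∀ e ∈ M, ∀ e' ∈ PCSet G M e, ∀ e'' ∈ PCSet G M e, e' ≠ e'' → e'' ∈ CSet G e'

/-- The edges of `G` with both endpoints in `S`. -/
def edgesWithin (G : SimpleGraph V) (S : Set V) : Set (Sym2 V) :=
  {e | e ∈ G.edgeSet ∧ ∀ a ∈ e, a ∈ S}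

/-- The edges of `G` with one endpoint in `S` and the other in `T`. -/
def edgesBetween (G : SimpleGraph V) (S T : Set V) : Set (Sym2 V) :=
  {e | e ∈ G.edgeSet ∧ ∃ a b : V, e = s(a, b) ∧ a ∈ S ∧ b ∈ T}

/-- `G` has no induced cycle of length 4. -/
def C4Free (G : SimpleGraph V) : Prop :=
  ¬ ∃ a b c d : V, G.Adj a b ∧ G.Adj b c ∧ G.Adj c d ∧ G.Adj d a ∧
      ¬ G.Adj a c ∧ ¬ G.Adj b d ∧ a ≠ c ∧ b ≠ d

/-- `G` has no induced cycle of length 5. -/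
def C5Free (G : SimpleGraph V) : Prop :=
  ¬ ∃ a b c d e : V, G.Adj a b ∧ G.Adj b c ∧ G.Adj c d ∧ G.Adj d e ∧ G.Adj e a ∧
      ¬ G.Adj a c ∧ ¬ G.Adj a d ∧ ¬ G.Adj b d ∧ ¬ G.Adj b e ∧ ¬ G.Adj c e ∧
      a ≠ c ∧ a ≠ d ∧ b ≠ d ∧ b ≠ e ∧ c ≠ e

/-- `G` has no induced `K_{1,3}` (claw). -/
def ClawFree (G : SimpleGraph V) : Prop :=
  ¬ ∃ v a b c : V, G.Adj v a ∧ G.Adj v b ∧ G.Adj v c ∧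
      ¬ G.Adj a b ∧ ¬ G.Adj a c ∧ ¬ G.Adj b c ∧ a ≠ b ∧ a ≠ c ∧ b ≠ c

/-!
Every edge of `G` conflicts with some edge of a maximal induced matching `M`, so
`m(G) ≤ |M| · max_{uv ∈ M} |C_G(uv)|`, and it suffices to bound the conflict set of one edge `uv`.
Its edges are those meeting `S = N(u) ∪ N(v)`, hence
`2 |C_G(uv)| = 2 ∑_{x ∈ S} deg x - ∑_{x ∈ S} deg_S x`, which calls for lower bounds on the degrees
inside `S`. Split `S` into `u`, `v`, `K = N(u) \ N[v]`, `L = N(v) \ N[u]` and `C = N(u) ∩ N(v)`.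
Claw-freeness at `u` or `v` makes cliques of `K`, of `L`, and of `C \ N(y)` for each `y ∈ K ∪ L`.
With `w` the largest `|C \ N(y)|`, each `y ∈ K` has `deg_S y ≥ |K| + |C| - w`, and `C` contains a
clique of `w` vertices of `S`-degree at least `w + 1`. Optimising the resulting quadratic bound
gives `(7/6) d² + d`.
-/

open Finset SimpleGraph

variable {G : SimpleGraph V}

lemma Conflict.symm {e f : Sym2 V} (h : Conflict G e f) : Conflict G f e := by
  obtain ⟨a, ha, b, hb, hab⟩ := h
  exact ⟨b, hb, a, ha, hab.imp Eq.symm Adj.symm⟩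

lemma conflict_self (e : Sym2 V) : Conflict G e e :=
  ⟨e.out.1, Sym2.out_fst_mem e, e.out.1, Sym2.out_fst_mem e, Or.inl rfl⟩

lemma IsInducedMatching.insert {M : Set (Sym2 V)} {f : Sym2 V} (hM : IsInducedMatching G M)
    (hf : f ∈ G.edgeSet) (hfM : ∀ e ∈ M, ¬ Conflict G e f) :
    IsInducedMatching G (insert f M) := by
  refine ⟨Set.insert_subset hf hM.1, ?_⟩
  rintro e (rfl | he) e' (rfl | he') hne
  · exact absurd rfl hne
  · exact fun h => hfM e' he' h.symm
  · exact hfM e he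
  · exact hM.2 e he e' he' hne

lemma IsMaximalInducedMatching.exists_mem_cSet {M : Set (Sym2 V)}
    (hmax : IsMaximalInducedMatching G M) {f : Sym2 V} (hf : f ∈ G.edgeSet) :
    ∃ e ∈ M, f ∈ CSet G e := by
  by_contra! h
  have hfM : ∀ e ∈ M, ¬ Conflict G e f := fun e he hc => h e he ⟨hf, hc⟩
  have hins := hmax.2 _ (hmax.1.insert hf hfM) (Set.subset_insert f M)
  exact hfM f (hins ▸ Set.mem_insert f M) (conflict_self f)

lemma IsMaximalInducedMatching.ncard_edgeSet_le [Finite V] {M : Set (Sym2 V)}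
    (hmax : IsMaximalInducedMatching G M) {B : ℝ} (hB : ∀ e ∈ M, ((CSet G e).ncard : ℝ) ≤ B) :
    (G.edgeSet.ncard : ℝ) ≤ M.ncard * B := by
  have hM := M.toFinite
  have hcover : G.edgeSet ⊆ ↑(hM.toFinset.biUnion fun e => (CSet G e).toFinite.toFinset) := by
    intro f hf
    obtain ⟨e, he, hfe⟩ := hmax.exists_mem_cSet hf
    simpa using ⟨e, he, hfe⟩
  calc (G.edgeSet.ncard : ℝ)
      ≤ #(hM.toFinset.biUnion fun e => (CSet G e).toFinite.toFinset) := by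
        exact_mod_cast (Set.ncard_le_ncard hcover).trans_eq (Set.ncard_coe_finset _)
    _ ≤ ∑ e ∈ hM.toFinset, ((CSet G e).ncard : ℝ) := by
        simp_rw [Set.ncard_eq_toFinset_card _ (Set.toFinite _)]
        exact_mod_cast card_biUnion_le
    _ ≤ M.ncard * B := by
        rw [Set.ncard_eq_toFinset_card M hM, ← nsmul_eq_mul]
        exact sum_le_card_nsmul _ _ _ fun e he => hB e (hM.mem_toFinset.1 he)

lemma ClawFree.isClique_neighborSet_sdiff (hclaw : ClawFree G) {x a : V} (hxa : G.Adj x a) :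
    G.IsClique (G.neighborSet x \ insert a (G.neighborSet a)) := by
  intro y hy z hz hyz
  by_contra hyz'
  simp only [Set.mem_sdiff, mem_neighborSet, Set.mem_insert_iff, not_or] at hy hz
  exact hclaw ⟨x, a, y, z, hxa, hy.1, hz.1, hy.2.2, hz.2.2, hyz', Ne.symm hy.2.1,
    Ne.symm hz.2.1, hyz⟩

lemma cast_le_of_two_mul_add_le {d k l c w t s : ℕ} (hwc : w ≤ c) (hkd : k + c + 1 ≤ d)
    (hld : l + c + 1 ≤ d) (ht : 2 * t + s ≤ 2 * ((2 + k + l + c) * d))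
    (hs : (k + c + 1) + (l + c + 1) + k * (k + c) + l * (l + c) + 2 * c + w * w ≤
      s + k * w + l * w + w) :
    (t : ℝ) ≤ 7 / 6 * d ^ 2 + d := by
  have hwc' : (w : ℝ) ≤ c := by exact_mod_cast hwc
  have hkd' : (k : ℝ) + c + 1 ≤ d := by exact_mod_cast hkd
  have hld' : (l : ℝ) + c + 1 ≤ d := by exact_mod_cast hld
  have ht' : 2 * (t : ℝ) + s ≤ 2 * ((2 + k + l + c) * d) := by exact_mod_cast ht
  have hs' : ((k : ℝ) + c + 1) + (l + c + 1) + k * (k + c) + l * (l + c) + 2 * c + w * w ≤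
      s + k * w + l * w + w := by exact_mod_cast hs
  have hw : (0 : ℝ) ≤ w := w.cast_nonneg
  -- the bound is asymptotically attained at `k = l = d - 1 - c` and `c = w ≈ d / 3`
  nlinarith [sq_nonneg ((d : ℝ) - 3 * w), mul_nonneg hw (sub_nonneg.2 hwc'),
    mul_nonneg hw (by linarith : (0 : ℝ) ≤ d - 1 - c - k),
    mul_nonneg hw (by linarith : (0 : ℝ) ≤ d - 1 - c - l),
    sq_nonneg ((d : ℝ) - 1 - c - k), sq_nonneg ((d : ℝ) - 1 - c - l)]

section EdgeCounting

variable [Fintype V] (G) (S : Finset V)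

noncomputable def edgesMeeting : Finset (Sym2 V) := {e ∈ G.edgeFinset | ∃ x ∈ e, x ∈ S}

lemma card_filter_mem_sym2 {e : Sym2 V} (he : ¬ e.IsDiag) :
    #{x ∈ S | x ∈ e} = (if ∃ x ∈ e, x ∈ S then 1 else 0) + (if ∀ x ∈ e, x ∈ S then 1 else 0) := by
  induction e using Sym2.ind with
  | _ a b =>
    have hab : a ≠ b := by simpa using he
    have hfilter : {x ∈ S | x ∈ s(a, b)} = {x ∈ ({a, b} : Finset V) | x ∈ S} := by
      ext; simp [and_comm]
    rw [hfilter, card_filter, sum_pair hab]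
    by_cases ha : a ∈ S <;> by_cases hb : b ∈ S <;> simp [ha, hb]

lemma sum_degree_eq_card_edgesMeeting_add :
    ∑ x ∈ S, G.degree x = #(edgesMeeting G S) + #{e ∈ G.edgeFinset | ∀ x ∈ e, x ∈ S} := by
  have hinc : ∀ x, G.degree x = #(G.edgeFinset.bipartiteAbove (· ∈ ·) x) := fun x => by
    rw [← G.card_incidenceFinset_eq_degree, G.incidenceFinset_eq_filter]; rfl
  simp_rw [hinc, sum_card_bipartiteAbove_eq_sum_card_bipartiteBelow, edgesMeeting, card_filter,
    ← sum_add_distrib]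
  refine sum_congr rfl fun e he => card_filter_mem_sym2 S (G.not_isDiag_of_mem_edgeSet ?_)
  exact G.mem_edgeFinset.1 he

lemma sum_card_neighborFinset_inter :
    ∑ x ∈ S, #(G.neighborFinset x ∩ S) = 2 * #{e ∈ G.edgeFinset | ∀ x ∈ e, x ∈ S} := by
  set H := (G.induce (S : Set V)).spanningCoe
  have hnbr : ∀ x, H.degree x = if x ∈ S then #(G.neighborFinset x ∩ S) else 0 := fun x => by
    rw [← H.card_neighborFinset_eq_degree]
    split_ifs with hx
    · congr 1; ext y; simp [H, hx]
    · rw [card_eq_zero, eq_empty_iff_forall_notMem]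
      simp [H, hx]
  have hedge : H.edgeFinset = {e ∈ G.edgeFinset | ∀ x ∈ e, x ∈ S} := by
    ext e
    induction e using Sym2.ind
    rw [mem_edgeFinset, mem_edgeSet]
    simp [H]
  rw [← hedge, ← H.sum_degrees_eq_twice_card_edges, ← sum_subset (subset_univ S)]
  · exact sum_congr rfl fun x hx => by rw [hnbr, if_pos hx]
  · intro x _ hx
    rw [hnbr, if_neg hx]

lemma two_mul_card_edgesMeeting_add_sum_le {d : ℕ} (hdeg : ∀ x, G.degree x ≤ d) :
    2 * #(edgesMeeting G S) + ∑ x ∈ S, #(G.neighborFinset x ∩ S) ≤ 2 * (#S * d) := by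
  have hdegS : ∑ x ∈ S, G.degree x ≤ #S * d := sum_le_card_nsmul _ _ _ fun x _ => hdeg x
  have := sum_degree_eq_card_edgesMeeting_add G S
  have := sum_card_neighborFinset_inter G S
  omega

end EdgeCounting

lemma SimpleGraph.IsClique.card_add_card_le_card_neighborFinset_inter [Fintype V]
    {Q R S : Finset V} (hQ : G.IsClique (Q : Set V)) (hQS : Q ⊆ S) {x : V} (hx : x ∈ Q)
    (hR : R ⊆ G.neighborFinset x ∩ S) (hRQ : Disjoint R Q) :
    #R + #Q ≤ #(G.neighborFinset x ∩ S) + 1 := by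
  have hsub : R ∪ Q.erase x ⊆ G.neighborFinset x ∩ S := union_subset hR fun y hy =>
    mem_inter.2 ⟨(G.mem_neighborFinset x y).2
      (hQ hx (mem_of_mem_erase hy) (ne_of_mem_erase hy).symm), hQS (mem_of_mem_erase hy)⟩
  have := card_le_card hsub
  rw [card_union_of_disjoint (hRQ.mono_right (erase_subset x Q))] at this
  have := card_erase_add_one hx
  omega

section EdgeNeighbourhood

variable [Fintype V] {u v : V}

noncomputable def exclNbrs (G : SimpleGraph V) (u v : V) : Finset V :=
  G.neighborFinset u \ insert v (G.neighborFinset v)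

noncomputable def commonNbrs (G : SimpleGraph V) (u v : V) : Finset V :=
  G.neighborFinset u ∩ G.neighborFinset v

@[simp]
lemma mem_exclNbrs {x : V} : x ∈ exclNbrs G u v ↔ G.Adj u x ∧ x ≠ v ∧ ¬ G.Adj v x := by
  simp [exclNbrs]

@[simp]
lemma mem_commonNbrs {x : V} : x ∈ commonNbrs G u v ↔ G.Adj u x ∧ G.Adj v x := by
  simp [commonNbrs]

lemma commonNbrs_comm : commonNbrs G u v = commonNbrs G v u :=
  inter_comm _ _

lemma card_exclNbrs_add_card_commonNbrs (huv : G.Adj u v) :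
    #(exclNbrs G u v) + (#(commonNbrs G u v) + 1) = G.degree u := by
  have hinter : G.neighborFinset u ∩ insert v (G.neighborFinset v) =
      insert v (commonNbrs G u v) :=
    inter_insert_of_mem ((G.mem_neighborFinset u v).2 huv)
  rw [← G.card_neighborFinset_eq_degree, ← card_sdiff_add_card_inter (G.neighborFinset u)
    (insert v (G.neighborFinset v)), hinter, card_insert_of_notMem (by simp)]
  rfl

lemma card_neighborFinset_union (huv : G.Adj u v) :
    #(G.neighborFinset u ∪ G.neighborFinset v) =
      2 + #(exclNbrs G u v) + #(exclNbrs G v u) + #(commonNbrs G u v) := by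
  have := card_union_add_card_inter (G.neighborFinset u) (G.neighborFinset v)
  have hu := card_exclNbrs_add_card_commonNbrs huv
  have hv := card_exclNbrs_add_card_commonNbrs huv.symm
  rw [commonNbrs_comm] at hv
  change _ + #(commonNbrs G u v) = _ at this
  simp only [card_neighborFinset_eq_degree] at this
  omega

lemma cSet_mk_subset_edgesMeeting (huv : G.Adj u v) :
    CSet G s(u, v) ⊆ edgesMeeting G (G.neighborFinset u ∪ G.neighborFinset v) := by
  rintro f ⟨hf, a, ha, b, hb, hab⟩
  refine mem_filter.2 ⟨G.mem_edgeFinset.2 hf, b, hb, ?_⟩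
  rcases Sym2.mem_iff.1 ha with rfl | rfl <;> rcases hab with rfl | hab <;> simp [*, huv.symm]

lemma add_add_sum_exclNbrs_le_sum_union (huv : G.Adj u v) (f : V → ℕ) :
    f u + f v + (∑ y ∈ exclNbrs G u v, f y + ∑ y ∈ exclNbrs G v u, f y +
      ∑ x ∈ commonNbrs G u v, f x) ≤ ∑ x ∈ G.neighborFinset u ∪ G.neighborFinset v, f x := by
  have hKL : Disjoint (exclNbrs G u v) (exclNbrs G v u) :=
    disjoint_left.2 fun x hx hx' => (mem_exclNbrs.1 hx).2.2 (mem_exclNbrs.1 hx').1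
  have hKLC : Disjoint (exclNbrs G u v ∪ exclNbrs G v u) (commonNbrs G u v) :=
    disjoint_left.2 fun x hx hx' => by
      simp only [mem_union, mem_exclNbrs, mem_commonNbrs] at hx hx'
      tauto
  have hv : v ∉ exclNbrs G u v ∪ exclNbrs G v u ∪ commonNbrs G u v := by simp
  have hu : u ∉ insert v (exclNbrs G u v ∪ exclNbrs G v u ∪ commonNbrs G u v) := by
    simp [huv.ne]
  have hsub : insert u (insert v (exclNbrs G u v ∪ exclNbrs G v u ∪ commonNbrs G u v)) ⊆
      G.neighborFinset u ∪ G.neighborFinset v := by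
    intro x
    simp +contextual [or_imp, huv, huv.symm]
  calc _ = ∑ x ∈ insert u (insert v (exclNbrs G u v ∪ exclNbrs G v u ∪ commonNbrs G u v)),
        f x := by
        rw [sum_insert hu, sum_insert hv, sum_union hKLC, sum_union hKL, add_assoc]
    _ ≤ _ := sum_le_sum_of_subset hsub

lemma ClawFree.isClique_exclNbrs (hclaw : ClawFree G) (huv : G.Adj u v) :
    G.IsClique (exclNbrs G u v : Set V) := by
  convert ClawFree.isClique_neighborSet_sdiff hclaw huv using 1
  ext; simp [exclNbrs]

lemma ClawFree.isClique_commonNbrs_sdiff (hclaw : ClawFree G) {y : V}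
    (hy : y ∈ exclNbrs G u v) :
    G.IsClique (↑(commonNbrs G u v \ G.neighborFinset y) : Set V) := by
  refine (ClawFree.isClique_neighborSet_sdiff hclaw (mem_exclNbrs.1 hy).1).subset fun x hx => ?_
  simp only [coe_sdiff, Set.mem_sdiff, mem_coe, mem_commonNbrs, mem_neighborFinset] at hx
  simp only [Set.mem_sdiff, mem_neighborSet, Set.mem_insert_iff, not_or]
  exact ⟨hx.1.1, fun hxy => (mem_exclNbrs.1 hy).2.2 (hxy ▸ hx.1.2), hx.2⟩

lemma ClawFree.exists_isClique_card_eq_sup (hclaw : ClawFree G) :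
    ∃ Q ⊆ commonNbrs G u v, G.IsClique (Q : Set V) ∧
      #Q = (exclNbrs G u v ∪ exclNbrs G v u).sup
        fun y => #(commonNbrs G u v \ G.neighborFinset y) := by
  rcases (exclNbrs G u v ∪ exclNbrs G v u).eq_empty_or_nonempty with h | h
  · exact ⟨∅, empty_subset _, by simp, by simp [h]⟩
  obtain ⟨y, hy, hsup⟩ := exists_mem_eq_sup _ h
    fun y => #(commonNbrs G u v \ G.neighborFinset y)
  refine ⟨_, sdiff_subset, ?_, hsup.symm⟩
  rcases mem_union.1 hy with hy | hy
  · exact ClawFree.isClique_commonNbrs_sdiff hclaw hy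
  · rw [commonNbrs_comm]
    exact ClawFree.isClique_commonNbrs_sdiff hclaw hy

lemma ClawFree.sum_exclNbrs_le (hclaw : ClawFree G) (huv : G.Adj u v) {S : Finset V}
    (hu : u ∈ S) (hNu : G.neighborFinset u ⊆ S) {w : ℕ}
    (hw : ∀ y ∈ exclNbrs G u v, #(commonNbrs G u v \ G.neighborFinset y) ≤ w) :
    #(exclNbrs G u v) * (#(exclNbrs G u v) + #(commonNbrs G u v)) ≤
      ∑ y ∈ exclNbrs G u v, #(G.neighborFinset y ∩ S) + #(exclNbrs G u v) * w := by
  have hbound : ∀ y ∈ exclNbrs G u v,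
      #(exclNbrs G u v) + #(commonNbrs G u v) ≤ #(G.neighborFinset y ∩ S) + w := by
    intro y hy
    have hyu : G.Adj u y := (mem_exclNbrs.1 hy).1
    have hR : insert u (commonNbrs G u v ∩ G.neighborFinset y) ⊆ G.neighborFinset y ∩ S := by
      refine insert_subset (by simp [hyu.symm, hu]) fun x hx => ?_
      simp only [mem_inter, mem_commonNbrs, mem_neighborFinset] at hx ⊢
      exact ⟨hx.2, hNu ((G.mem_neighborFinset u x).2 hx.1.1)⟩
    have hRK : Disjoint (insert u (commonNbrs G u v ∩ G.neighborFinset y)) (exclNbrs G u v) := by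
      rw [disjoint_insert_left]
      refine ⟨by simp, disjoint_left.2 fun x hx hxK => ?_⟩
      simp only [mem_inter, mem_commonNbrs] at hx
      exact (mem_exclNbrs.1 hxK).2.2 hx.1.2
    have hclique :=
      (ClawFree.isClique_exclNbrs hclaw huv).card_add_card_le_card_neighborFinset_inter
        (fun x hx => hNu (mem_sdiff.1 hx).1) hy hR hRK
    rw [card_insert_of_notMem (by simp)] at hclique
    have := card_inter_add_card_sdiff (commonNbrs G u v) (G.neighborFinset y)
    have := hw y hy
    omega
  calc #(exclNbrs G u v) * (#(exclNbrs G u v) + #(commonNbrs G u v))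
      ≤ ∑ y ∈ exclNbrs G u v, (#(G.neighborFinset y ∩ S) + w) := by
        rw [← smul_eq_mul, ← sum_const]
        exact sum_le_sum hbound
    _ = _ := by rw [sum_add_distrib, sum_const, smul_eq_mul]

lemma SimpleGraph.IsClique.le_sum_commonNbrs (huv : G.Adj u v) {S : Finset V} (hu : u ∈ S)
    (hv : v ∈ S) (hNu : G.neighborFinset u ⊆ S) {Q : Finset V} (hQ : G.IsClique (Q : Set V))
    (hQC : Q ⊆ commonNbrs G u v) :
    2 * #(commonNbrs G u v) + #Q * #Q ≤ ∑ x ∈ commonNbrs G u v, #(G.neighborFinset x ∩ S) + #Q := by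
  have huv_sub : ∀ x ∈ commonNbrs G u v, ({u, v} : Finset V) ⊆ G.neighborFinset x ∩ S :=
    fun x hx => by
      rw [mem_commonNbrs] at hx
      simp [insert_subset_iff, hx.1.symm, hx.2.symm, hu, hv]
  have huvQ : Disjoint ({u, v} : Finset V) Q := by
    simp only [disjoint_insert_left, disjoint_singleton_left]
    exact ⟨fun h => by simpa using hQC h, fun h => by simpa using hQC h⟩
  have hQS : Q ⊆ S := fun x hx => hNu (mem_inter.1 (hQC hx)).1
  have hQbound : ∀ x ∈ Q, #Q + 1 ≤ #(G.neighborFinset x ∩ S) := fun x hx => by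
    have := hQ.card_add_card_le_card_neighborFinset_inter hQS hx (huv_sub x (hQC hx)) huvQ
    rw [card_pair huv.ne] at this
    omega
  have hCbound : ∀ x ∈ commonNbrs G u v, 2 ≤ #(G.neighborFinset x ∩ S) := fun x hx =>
    (card_pair huv.ne).symm.le.trans (card_le_card (huv_sub x hx))
  rw [← sum_sdiff hQC]
  have h1 := card_nsmul_le_sum (commonNbrs G u v \ Q) _ 2 fun x hx => hCbound x (mem_sdiff.1 hx).1
  have h2 := card_nsmul_le_sum Q _ (#Q + 1) hQbound
  have := card_sdiff_add_card_eq_card hQC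
  simp only [smul_eq_mul] at h1 h2
  nlinarith

lemma ClawFree.exists_le_sum_card_neighborFinset_inter (hclaw : ClawFree G) (huv : G.Adj u v) :
    ∃ w ≤ #(commonNbrs G u v),
      G.degree u + G.degree v + #(exclNbrs G u v) * (#(exclNbrs G u v) + #(commonNbrs G u v)) +
        #(exclNbrs G v u) * (#(exclNbrs G v u) + #(commonNbrs G u v)) +
        2 * #(commonNbrs G u v) + w * w ≤
      ∑ x ∈ G.neighborFinset u ∪ G.neighborFinset v,
          #(G.neighborFinset x ∩ (G.neighborFinset u ∪ G.neighborFinset v)) +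
        #(exclNbrs G u v) * w + #(exclNbrs G v u) * w + w := by
  obtain ⟨Q, hQC, hQ, hQw⟩ := ClawFree.exists_isClique_card_eq_sup hclaw (u := u) (v := v)
  have hwK : ∀ y ∈ exclNbrs G u v, #(commonNbrs G u v \ G.neighborFinset y) ≤ #Q :=
    fun y hy => hQw ▸ le_sup (f := fun y => #(commonNbrs G u v \ G.neighborFinset y))
      (mem_union_left _ hy)
  have hwL : ∀ y ∈ exclNbrs G v u, #(commonNbrs G v u \ G.neighborFinset y) ≤ #Q :=
    fun y hy => commonNbrs_comm (G := G) ▸ hQw ▸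
      le_sup (f := fun y => #(commonNbrs G u v \ G.neighborFinset y)) (mem_union_right _ hy)
  have hNu : G.neighborFinset u ⊆ G.neighborFinset u ∪ G.neighborFinset v := subset_union_left
  have hNv : G.neighborFinset v ⊆ G.neighborFinset u ∪ G.neighborFinset v := subset_union_right
  have hu := hNv ((G.mem_neighborFinset v u).2 huv.symm)
  have hv := hNu ((G.mem_neighborFinset u v).2 huv)
  have hparts := add_add_sum_exclNbrs_le_sum_union huv
    fun x => #(G.neighborFinset x ∩ (G.neighborFinset u ∪ G.neighborFinset v))
  simp only [inter_eq_left.2 hNu, inter_eq_left.2 hNv, card_neighborFinset_eq_degree] at hparts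
  have hK := ClawFree.sum_exclNbrs_le hclaw huv hu hNu hwK
  have hL := ClawFree.sum_exclNbrs_le hclaw huv.symm hv hNv hwL
  rw [commonNbrs_comm] at hL
  have hC := hQ.le_sum_commonNbrs huv hu hv hNu hQC
  exact ⟨#Q, card_le_card hQC, by omega⟩

theorem ClawFree.ncard_cSet_le (hclaw : ClawFree G) {d : ℕ} (hdeg : ∀ x, G.degree x ≤ d)
    (huv : G.Adj u v) :
    ((CSet G s(u, v)).ncard : ℝ) ≤ 7 / 6 * d ^ 2 + d := by
  have hT : (CSet G s(u, v)).ncard ≤ #(edgesMeeting G (G.neighborFinset u ∪ G.neighborFinset v)) :=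
    (Set.ncard_le_ncard (cSet_mk_subset_edgesMeeting huv) (Set.toFinite _)).trans_eq
      (Set.ncard_coe_finset _)
  obtain ⟨w, hwc, hinside⟩ := ClawFree.exists_le_sum_card_neighborFinset_inter hclaw huv
  have hdu := card_exclNbrs_add_card_commonNbrs huv
  have hdv := card_exclNbrs_add_card_commonNbrs huv.symm
  rw [commonNbrs_comm] at hdv
  have hcount :=
    two_mul_card_edgesMeeting_add_sum_le G (G.neighborFinset u ∪ G.neighborFinset v) hdeg
  rw [card_neighborFinset_union huv] at hcount
  exact (Nat.cast_le.2 hT).trans (cast_le_of_two_mul_add_le hwc (hdu ▸ hdeg u) (hdv ▸ hdeg v)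
    hcount (by omega))

end EdgeNeighbourhood

theorem stmt12_general [Fintype V] (G : SimpleGraph V) (d : ℕ)
    (hΔ : ∀ v : V, (G.neighborSet v).ncard ≤ d) (hclaw : ClawFree G)
    (M : Set (Sym2 V)) (hmax : IsMaximalInducedMatching G M) :
    (M.ncard : ℝ) ≥ (G.edgeSet.ncard : ℝ) / ((7 / 6) * (d : ℝ) ^ 2 + (d : ℝ)) := by
  have hdeg : ∀ x, G.degree x ≤ d := fun x => by
    simpa [← card_neighborSet_eq_degree, Set.ncard_eq_toFinset_card'] using hΔ x
  have hC : ∀ e ∈ M, ((CSet G e).ncard : ℝ) ≤ 7 / 6 * d ^ 2 + d := by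
    intro e he
    induction e using Sym2.ind with
    | _ a b => exact ClawFree.ncard_cSet_le hclaw hdeg (hmax.1.1 he)
  exact div_le_of_le_mul₀ (by positivity) (by positivity) (hmax.ncard_edgeSet_le hC)

/-- maximal induced matchings in claw-free graphs. -/
theorem stmt12 [Fintype V] (G : SimpleGraph V) (d : ℕ) (hd : 3 ≤ d)
    (hΔ : ∀ v : V, (G.neighborSet v).ncard ≤ d) (hclaw : ClawFree G)
    (M : Set (Sym2 V)) (hmax : IsMaximalInducedMatching G M) :
    (M.ncard : ℝ) ≥ (G.edgeSet.ncard : ℝ) / ((7 / 6) * (d : ℝ) ^ 2 + (d : ℝ)) :=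
  stmt12_general G d hΔ hclaw M hmax
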